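/- arXiv:math/9912060 — 3 statements merged into one kernel-verified Lean document; each statement's English description precedes it below -/
import Mathlib

section
/- Let (C, τ) be a presite. Define: an arrow f : X → Y of C is 'locally P' if there exists a covering {u_i : U_i → X}_{i∈I} in τ such that every composite f∘u_i satisfies property P. Then the class of pullbackable locally clopen arrows of C (arrows that are locally in O_τ and admit all pullbacks) is closed under composition and under pullback along arbitrary arrows, and contains all isomorphisms; i.e., it forms a clopos structure on C. -/
open CategoryTheory

universe u v

/-- A presite: a category equipped with a pretopology (coverings satisfying
(PT1)–(PT3), with pullbackability of members of coverings built in). -/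
structure Presite (C : Type u) [Category.{v} C] where
  covers : ∀ X : C, Set (Presieve X)
  iso_mem : ∀ {X Y : C} (f : Y ⟶ X), IsIso f → Presieve.singleton f ∈ covers X
  pb_exists : ∀ {X : C} {S : Presieve X}, S ∈ covers X → ∀ {U : C} {u : U ⟶ X}, S u →
    ∀ {Y : C} (f : Y ⟶ X), ∃ (P : C) (p : P ⟶ Y) (q : P ⟶ U), IsPullback p q f u
  pb_mem : ∀ {X : C} {S : Presieve X}, S ∈ covers X → ∀ {Y : C} (f : Y ⟶ X)
    (T : Presieve Y),
    (∀ {V : C} (g : V ⟶ Y), T g →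
      ∃ (U : C) (u : U ⟶ X) (h : V ⟶ U), S u ∧ IsPullback g h f u) →
    (∀ {U : C} (u : U ⟶ X), S u →
      ∃ (V : C) (g : V ⟶ Y) (h : V ⟶ U), T g ∧ IsPullback g h f u) →
    T ∈ covers Y
  bind_mem : ∀ {X : C} {S : Presieve X}, S ∈ covers X →
    ∀ (R : ∀ ⦃Y : C⦄ ⦃f : Y ⟶ X⦄, S f → Presieve Y),
    (∀ ⦃Y : C⦄ ⦃f : Y ⟶ X⦄ (h : S f), R h ∈ covers Y) → Presieve.bind S R ∈ covers X

/-- The class `O_τ` of clopen arrows of a presite: arrows belonging to some covering. -/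
def Presite.clopen {C : Type u} [Category.{v} C] (τ : Presite C) {U X : C}
    (u : U ⟶ X) : Prop :=
  ∃ S ∈ τ.covers X, S u

/-- An arrow is locally clopen if some covering of its source makes all the composites
clopen. -/
def Presite.locallyClopen {C : Type u} [Category.{v} C] (τ : Presite C) {X Y : C}
    (f : X ⟶ Y) : Prop :=
  ∃ S ∈ τ.covers X, ∀ {U : C} (u : U ⟶ X), S u → τ.clopen (u ≫ f)

/-- An arrow is pullbackable if pullbacks of it along arbitrary arrows exist. -/
def Pullbackable {C : Type u} [Category.{v} C] {X Y : C} (f : X ⟶ Y) : Prop :=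
  ∀ {Z : C} (g : Z ⟶ Y), ∃ (P : C) (p : P ⟶ Z) (q : P ⟶ X), IsPullback p q g f

/-- Clopen arrows are stable under pullback. -/
lemma Presite.clopen_of_isPullback {C : Type u} [Category.{v} C] (τ : Presite C)
    {U X Z P : C} {u : U ⟶ X} (hu : τ.clopen u) {p : P ⟶ Z} {q : P ⟶ U} {g : Z ⟶ X}
    (hpb : IsPullback p q g u) : τ.clopen p := by
  obtain ⟨S, hS, hSu⟩ := hu
  refine ⟨fun {V} t => ∃ (U' : C) (u' : U' ⟶ X) (k : V ⟶ U'), S u' ∧ IsPullback t k g u',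
    ?_, U, u, q, hSu, hpb⟩
  refine τ.pb_mem hS g _ (fun {V} t ht => ?_) (fun {U'} u' hu' => ?_)
  · obtain ⟨U', u', k, h1, h2⟩ := ht
    exact ⟨U', u', k, h1, h2⟩
  · obtain ⟨P', p', q', h⟩ := τ.pb_exists hS hu' g
    exact ⟨P', p', q', ⟨U', u', q', hu', h⟩, h⟩

/-- Clopen arrows are stable under composition. -/
lemma Presite.clopen_comp {C : Type u} [Category.{v} C] (τ : Presite C)
    {W U X : C} {w : W ⟶ U} {u : U ⟶ X} (hw : τ.clopen w) (hu : τ.clopen u) :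
    τ.clopen (w ≫ u) := by
  obtain ⟨S, hS, hSu⟩ := hu
  obtain ⟨T, hT, hTw⟩ := hw
  classical
  refine ⟨Presieve.bind S (fun Y' f' _ =>
      if hc : Y' = U then (fun {V} g => T (g ≫ eqToHom hc)) else Presieve.singleton (𝟙 Y')),
    τ.bind_mem hS _ (fun Y' f' hf => ?_), U, w, u, hSu, ?_, rfl⟩
  · by_cases hc : Y' = U
    · subst hc
      rw [dif_pos rfl]
      simpa using hT
    · rw [dif_neg hc]
      exact τ.iso_mem _ inferInstance
  · show ((if hc : U = U then (fun {V} g => T (g ≫ eqToHom hc))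
        else Presieve.singleton (𝟙 U) : Presieve U)) w
    rw [dif_pos rfl]
    simpa using hTw

/-- In any presite, the class of pullbackable locally clopen arrows forms a clopos
structure: it contains all isomorphisms, and is closed under composition and under
pullback along arbitrary arrows. -/
theorem stmt10 {C : Type u} [Category.{v} C] (τ : Presite C) :
    (∀ {X Y : C} (f : X ⟶ Y), IsIso f → τ.locallyClopen f ∧ Pullbackable f) ∧
    (∀ {X Y Z : C} (f : X ⟶ Y) (g : Y ⟶ Z),
      τ.locallyClopen f ∧ Pullbackable f → τ.locallyClopen g ∧ Pullbackable g →
      τ.locallyClopen (f ≫ g) ∧ Pullbackable (f ≫ g)) ∧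
    (∀ {P Z X Y : C} (p : P ⟶ Z) (q : P ⟶ X) (g : Z ⟶ Y) (f : X ⟶ Y),
      τ.locallyClopen f ∧ Pullbackable f → IsPullback p q g f →
      τ.locallyClopen p ∧ Pullbackable p) := by
  refine ⟨fun {X Y} f hf => ⟨?_, ?_⟩, fun {X Y Z} f g ⟨hfl, hfp⟩ ⟨hgl, hgp⟩ => ⟨?_, ?_⟩,
    fun {P Z X Y} p q g f ⟨hfl, hfp⟩ hpb => ⟨?_, ?_⟩⟩
  -- isos are locally clopen
  · refine ⟨Presieve.singleton (𝟙 X), τ.iso_mem _ inferInstance, fun {U} u hu => ?_⟩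
    cases hu
    haveI := hf
    exact ⟨Presieve.singleton (𝟙 X ≫ f), τ.iso_mem _ (by simpa using hf),
      Presieve.singleton.mk⟩
  -- isos are pullbackable
  · intro Z g
    haveI := hf
    exact ⟨Z, 𝟙 Z, g ≫ inv f, IsPullback.of_horiz_isIso ⟨by simp⟩⟩
  -- composition: locally clopen
  · obtain ⟨S, hS, hSf⟩ := hfl
    obtain ⟨T, hT, hTg⟩ := hgl
    refine ⟨Presieve.bind S (fun U u _ =>
        fun {W} w => ∃ (V : C) (v : V ⟶ Y) (k : W ⟶ V), T v ∧ IsPullback w k (u ≫ f) v),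
      τ.bind_mem hS _ (fun U u hu => ?_), fun {M} m hm => ?_⟩
    · refine τ.pb_mem hT (u ≫ f) _ (fun {W} w hw => ?_) (fun {V} v hv => ?_)
      · obtain ⟨V, v, k, h1, h2⟩ := hw
        exact ⟨V, v, k, h1, h2⟩
      · obtain ⟨W, w, k, h⟩ := τ.pb_exists hT hv (u ≫ f)
        exact ⟨W, w, k, ⟨V, v, k, hv, h⟩, h⟩
    · obtain ⟨U, w, u, hu, ⟨V, v, k, hv, hk⟩, rfl⟩ := hm
      have h1 : τ.clopen k := τ.clopen_of_isPullback (hSf u hu) hk.flip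
      have h2 : τ.clopen (k ≫ (v ≫ g)) := τ.clopen_comp h1 (hTg v hv)
      have : (w ≫ u) ≫ f ≫ g = k ≫ v ≫ g := by
        rw [Category.assoc, ← Category.assoc u f g, ← Category.assoc w (u ≫ f) g,
          hk.w, Category.assoc]
      rwa [this]
  -- composition: pullbackable
  · intro W h
    obtain ⟨P1, p1, q1, s1⟩ := hgp h
    obtain ⟨P2, p2, q2, s2⟩ := hfp q1
    exact ⟨P2, p2 ≫ p1, q2, IsPullback.paste_horiz s2 s1⟩
  -- pullback: locally clopen
  · obtain ⟨S, hS, hSf⟩ := hfl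
    refine ⟨fun {V} t => ∃ (U : C) (u : U ⟶ X) (k : V ⟶ U), S u ∧ IsPullback t k q u,
      τ.pb_mem hS q _ (fun {V} t ht => ?_) (fun {U} u hu => ?_), fun {V} t ht => ?_⟩
    · obtain ⟨U, u, k, h1, h2⟩ := ht
      exact ⟨U, u, k, h1, h2⟩
    · obtain ⟨V, t, k, h⟩ := τ.pb_exists hS hu q
      exact ⟨V, t, k, ⟨U, u, k, hu, h⟩, h⟩
    · obtain ⟨U, u, k, hu, hk⟩ := ht
      exact τ.clopen_of_isPullback (hSf u hu) (IsPullback.paste_horiz hk hpb)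
  -- pullback: pullbackable
  · intro W h
    obtain ⟨Q, a, b, big⟩ := hfp (h ≫ g)
    exact ⟨Q, a, _, IsPullback.of_bot' big hpb⟩
end

section
/- Let τ be a pretopology on a category C, and define the operations: M τ = the pretopology whose coverings are the coverings of τ consisting of monomorphisms; L τ = the pretopology whose coverings are the sinks consisting of pullbackable locally clopen arrows that admit a refinement belonging to τ; and SG(τ) = (L M τ) ∩ τ. Then the inclusions M τ ⊆ SG(τ) ⊆ τ ⊆ L τ hold, and the following identities hold as operations on pretopologies: M∘M = M, SG∘SG = SG, SG∘M = M, and M∘SG = M. -/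
open CategoryTheory

universe u v

variable (C : Type u) [Category.{v} C]

/-- An assignment of a set of covering sinks (presieves) to each object. -/
abbrev CoverFun := ∀ X : C, Set (Presieve X)

variable {C}

/-- Clopen arrows with respect to a cover function: members of some covering. -/
def clopenF (τ : CoverFun C) {U X : C} (u : U ⟶ X) : Prop :=
  ∃ S ∈ τ X, S u

/-- `T` is a refinement of `S`: every member of `T` factors through some member of
`S`. -/
def RefinesF {X : C} (T S : Presieve X) : Prop :=
  ∀ {V : C} (t : V ⟶ X), T t → ∃ (U : C) (s : U ⟶ X) (h : V ⟶ U), S s ∧ h ≫ s = t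

/-- An arrow is pullbackable and locally clopen with respect to `τ`. -/
def pbLocClopenF (τ : CoverFun C) {X Y : C} (f : X ⟶ Y) : Prop :=
  (∃ S ∈ τ X, ∀ {U : C} (u : U ⟶ X), S u → clopenF τ (u ≫ f)) ∧
    ∀ {Z : C} (g : Z ⟶ Y), ∃ (P : C) (p : P ⟶ Z) (q : P ⟶ X), IsPullback p q g f

/-- `τ` is a pretopology: (PT1)–(PT3) together with the completeness axiom (PT4). -/
structure IsPretop (τ : CoverFun C) : Prop where
  iso_mem : ∀ {X Y : C} (f : Y ⟶ X), IsIso f → Presieve.singleton f ∈ τ X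
  pb_exists : ∀ {X : C} {S : Presieve X}, S ∈ τ X → ∀ {U : C} {u : U ⟶ X}, S u →
    ∀ {Y : C} (f : Y ⟶ X), ∃ (P : C) (p : P ⟶ Y) (q : P ⟶ U), IsPullback p q f u
  pb_mem : ∀ {X : C} {S : Presieve X}, S ∈ τ X → ∀ {Y : C} (f : Y ⟶ X)
    (T : Presieve Y),
    (∀ {V : C} (g : V ⟶ Y), T g →
      ∃ (U : C) (u : U ⟶ X) (h : V ⟶ U), S u ∧ IsPullback g h f u) →
    (∀ {U : C} (u : U ⟶ X), S u →
      ∃ (V : C) (g : V ⟶ Y) (h : V ⟶ U), T g ∧ IsPullback g h f u) →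
    T ∈ τ Y
  bind_mem : ∀ {X : C} {S : Presieve X}, S ∈ τ X →
    ∀ (R : ∀ ⦃Y : C⦄ ⦃f : Y ⟶ X⦄, S f → Presieve Y),
    (∀ ⦃Y : C⦄ ⦃f : Y ⟶ X⦄ (h : S f), R h ∈ τ Y) → Presieve.bind S R ∈ τ X
  refine_mem : ∀ {X : C} (S : Presieve X),
    (∀ {U : C} (u : U ⟶ X), S u → clopenF τ u) →
    (∃ T ∈ τ X, RefinesF T S) → S ∈ τ X

/-- The operation `M`: keep only the coverings consisting of monomorphisms. -/
def Mop (τ : CoverFun C) : CoverFun C := fun X =>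
  {S | S ∈ τ X ∧ ∀ {U : C} (u : U ⟶ X), S u → Mono u}

/-- The operation `L`: the coverings are the sinks of pullbackable locally clopen
arrows admitting a refinement belonging to `τ`. -/
def Lop (τ : CoverFun C) : CoverFun C := fun X =>
  {S | (∀ {U : C} (u : U ⟶ X), S u → pbLocClopenF τ u) ∧ ∃ T ∈ τ X, RefinesF T S}

/-- The operation `SG`: `SG(τ) = (L M τ) ∩ τ`. -/
def SGop (τ : CoverFun C) : CoverFun C := fun X => Lop (Mop τ) X ∩ τ X

/-- The inclusions `Mτ ⊆ SG(τ) ⊆ τ ⊆ Lτ` and the algebraic relations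
`M² = M`, `SG² = SG`, `SG∘M = M`, `M∘SG = M`. -/
theorem stmt11 (τ : CoverFun C) (h : IsPretop τ) :
    (∀ X : C, Mop τ X ⊆ SGop τ X) ∧
    (∀ X : C, SGop τ X ⊆ τ X) ∧
    (∀ X : C, τ X ⊆ Lop τ X) ∧
    Mop (Mop τ) = Mop τ ∧
    SGop (SGop τ) = SGop τ ∧
    SGop (Mop τ) = Mop τ ∧
    Mop (SGop τ) = Mop τ := by
  have hML : ∀ X : C, Mop τ X ⊆ Lop (Mop τ) X := by
    intro X S hS
    constructor
    · intro U u hu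
      constructor
      · refine ⟨Presieve.singleton (𝟙 U), ⟨h.iso_mem (𝟙 U) inferInstance, ?_⟩, ?_⟩
        · rintro V v ⟨⟩; infer_instance
        · rintro V v ⟨⟩
          rw [Category.id_comp]
          exact ⟨S, hS, hu⟩
      · intro Z g; exact h.pb_exists hS.1 hu g
    · exact ⟨S, hS, fun {V} t ht => ⟨V, t, 𝟙 V, ht, Category.id_comp t⟩⟩
  have h1 : ∀ X : C, Mop τ X ⊆ SGop τ X := fun X S hS => ⟨hML X hS, hS.1⟩
  have h3 : ∀ X : C, τ X ⊆ Lop τ X := by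
    intro X S hS
    constructor
    · intro U u hu
      constructor
      · refine ⟨Presieve.singleton (𝟙 U), h.iso_mem (𝟙 U) inferInstance, ?_⟩
        rintro V v ⟨⟩
        rw [Category.id_comp]
        exact ⟨S, hS, hu⟩
      · intro Z g; exact h.pb_exists hS hu g
    · exact ⟨S, hS, fun {V} t ht => ⟨V, t, 𝟙 V, ht, Category.id_comp t⟩⟩
  have h4 : Mop (Mop τ) = Mop τ :=
    funext fun X => Set.ext fun S => ⟨fun hS => hS.1, fun hS => ⟨hS, hS.2⟩⟩
  have h7 : Mop (SGop τ) = Mop τ :=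
    funext fun X => Set.ext fun S =>
      ⟨fun hS => ⟨hS.1.2, hS.2⟩, fun hS => ⟨h1 X hS, hS.2⟩⟩
  have h5 : SGop (SGop τ) = SGop τ := by
    funext X
    ext S
    constructor
    · exact fun hS => hS.2
    · intro hS
      refine ⟨?_, hS⟩
      show S ∈ Lop (Mop (SGop τ)) X
      rw [h7]
      exact hS.1
  have h6 : SGop (Mop τ) = Mop τ := by
    funext X
    ext S
    constructor
    · exact fun hS => hS.2
    · intro hS
      refine ⟨?_, hS⟩
      show S ∈ Lop (Mop (Mop τ)) X
      rw [h4]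
      exact hML X hS
  exact ⟨h1, fun X S hS => hS.2, h3, h4, h5, h6, h7⟩
end

section
/- Let (C, O) be an ultraglutos, i.e. a clopos satisfying axioms (G1)–(G4) and the strong axiom (G5): every epi in O is effective, if fp ∈ O and p ∈ O with p epi then f ∈ O, and every open equivalence relation in C is effective and has a universal coequalizer belonging to O. Then axiom (G5P) holds automatically: for every diagram X →^r R →^g S with r an open epimorphism, and every arrow f : Y → S such that the pullback V of f along g∘r exists, the pullback of f along g exists. -/
open CategoryTheory Limits

universe u v

/-- A pair of parallel arrows (possibly with different codomains) is jointly monic. -/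
def JointlyMono {C : Type u} [Category.{v} C] {U X Y : C} (d0 : U ⟶ X) (d1 : U ⟶ Y) :
    Prop :=
  ∀ {T : C} (f g : T ⟶ U), f ≫ d0 = g ≫ d0 → f ≫ d1 = g ≫ d1 → f = g

/-- `(d0, d1)` is an equivalence relation on `X` in the functorial sense. -/
def IsEquivRelPair {C : Type u} [Category.{v} C] {U X : C} (d0 d1 : U ⟶ X) : Prop :=
  JointlyMono d0 d1 ∧
    ∀ T : C, Equivalence (fun a b : T ⟶ X => ∃ h : T ⟶ U, h ≫ d0 = a ∧ h ≫ d1 = b)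

/-- A clopos structure (axiom (G1)). -/
structure Clopos (C : Type u) [Category.{v} C] where
  O : MorphismProperty C
  iso_mem : ∀ {X Y : C} (f : X ⟶ Y), IsIso f → O f
  comp_mem : ∀ {X Y Z : C} (f : X ⟶ Y) (g : Y ⟶ Z), O f → O g → O (f ≫ g)
  pb_exists : ∀ {X Y Z : C} (f : X ⟶ Z) (u : Y ⟶ Z), O u →
    ∃ (P : C) (p : P ⟶ X) (q : P ⟶ Y), IsPullback p q f u
  pb_stable : ∀ {P X Y Z : C} (p : P ⟶ X) (q : P ⟶ Y) (f : X ⟶ Z) (u : Y ⟶ Z),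
    O u → IsPullback p q f u → O p

variable {C : Type u} [Category.{v} C]

/-- `O/X`: the full subcategory of the slice on clopen arrows. -/
abbrev OSlice (G : Clopos C) (X : C) : Type max u v :=
  ObjectProperty.FullSubcategory (fun f : Over X => G.O f.hom)

/-!
Put `V = X ×_S Y`. Pairs of arrows into `V` with the same composite with `v1 ≫ r` and with `v2`
are classified by an open equivalence relation `U ⇉ V` (a pullback of the kernel pair of `r`), so
(G5cu) gives a quotient `q : V ⟶ Q` with induced `w1 : Q ⟶ R`, `w2 : Q ⟶ Y`, and `Q` is the
pullback `R ×_S Y`. The pair `(w1, w2)` is jointly monic because the pullbacks of `q` are epi.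
A cone `T ⟶ R`, `T ⟶ Y` lifts to `Q` by descent along the pullback of `r` to `T`: by (G5a) `r`
is a coequalizer of its kernel pair, hence isomorphic to the universal coequalizer that (G5cu)
provides for that kernel pair, so every pullback of `r` is a coequalizer of its kernel pair.
-/

lemma isEquivRelPair_of_iff {U X : C} {d0 d1 : U ⟶ X} (hm : JointlyMono d0 d1)
    {α : C → Sort*} (F : ∀ {T : C}, (T ⟶ X) → α T)
    (hrel : ∀ {T : C} (a b : T ⟶ X), (∃ h : T ⟶ U, h ≫ d0 = a ∧ h ≫ d1 = b) ↔ F a = F b) :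
    IsEquivRelPair d0 d1 := by
  refine ⟨hm, fun T => ?_⟩
  simp only [hrel]
  exact ⟨fun _ => rfl, Eq.symm, Eq.trans⟩

lemma CategoryTheory.IsPullback.isEquivRelPair {K X R : C} {k1 k2 : K ⟶ X} {r : X ⟶ R}
    (hK : IsPullback k1 k2 r r) : IsEquivRelPair k1 k2 :=
  isEquivRelPair_of_iff (fun _ _ => hK.hom_ext) (fun a => a ≫ r) fun a b =>
    ⟨fun ⟨h, ha, hb⟩ => by rw [← ha, ← hb, Category.assoc, Category.assoc, hK.w],
      fun hab => ⟨hK.lift a b hab, hK.lift_fst _ _ _, hK.lift_snd _ _ _⟩⟩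

lemma CategoryTheory.IsPullback.of_jointlyMono_of_exists_lift {P X Y Z : C} {fst : P ⟶ X}
    {snd : P ⟶ Y} {f : X ⟶ Z} {g : Y ⟶ Z} (w : fst ≫ f = snd ≫ g) (hm : JointlyMono fst snd)
    (hlift : ∀ {T : C} (a : T ⟶ X) (b : T ⟶ Y), a ≫ f = b ≫ g →
      ∃ l : T ⟶ P, l ≫ fst = a ∧ l ≫ snd = b) :
    IsPullback fst snd f g := by
  choose l hl₁ hl₂ using fun s : PullbackCone f g => hlift s.fst s.snd s.condition
  exact IsPullback.of_isLimit (PullbackCone.IsLimit.mk w l hl₁ hl₂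
    fun s m h₁ h₂ => hm m (l s) (h₁.trans (hl₁ s).symm) (h₂.trans (hl₂ s).symm))

-- The effectiveness of (G5a), and its pullback-stable form from (G5cu).
def IsCoequalizerOfKernelPair {X Y : C} (p : X ⟶ Y) : Prop :=
  ∀ {K : C} (k1 k2 : K ⟶ X) (hk : IsPullback k1 k2 p p),
    Nonempty (IsColimit (Cofork.ofπ p hk.w))

def IsUniversalCoequalizerOfKernelPair {X Y : C} (p : X ⟶ Y) : Prop :=
  ∀ {Z : C} (f : Z ⟶ Y) {X' : C} (pX : X' ⟶ X) (pZ : X' ⟶ Z),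
    IsPullback pX pZ p f → IsCoequalizerOfKernelPair pZ

lemma IsUniversalCoequalizerOfKernelPair.comp_isIso {X Y Y' : C} {p : X ⟶ Y}
    (hp : IsUniversalCoequalizerOfKernelPair p) (i : Y ⟶ Y') [IsIso i] :
    IsUniversalCoequalizerOfKernelPair (p ≫ i) := by
  intro Z f X' pX pZ h
  exact hp (f ≫ inv i) pX pZ (h.of_iso (Iso.refl _) (Iso.refl _) (Iso.refl _) (asIso (inv i))
    (by simp) (by simp) (by simp) (by simp))

lemma IsUniversalCoequalizerOfKernelPair.of_isColimit {K X Q R : C} {k1 k2 : K ⟶ X}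
    {q : X ⟶ Q} {r : X ⟶ R} {hwq : k1 ≫ q = k2 ≫ q} {hwr : k1 ≫ r = k2 ≫ r}
    (hq : IsColimit (Cofork.ofπ q hwq)) (hr : IsColimit (Cofork.ofπ r hwr))
    (hqu : IsUniversalCoequalizerOfKernelPair q) :
    IsUniversalCoequalizerOfKernelPair r := by
  have hqr : q ≫ (hq.coconePointUniqueUpToIso hr).hom = r :=
    hq.comp_coconePointUniqueUpToIso_hom hr WalkingParallelPair.one
  rw [← hqr]
  apply hqu.comp_isIso

namespace Clopos

variable (G : Clopos C)

lemma epi_of_isCoequalizerOfKernelPair {X Y : C} {p : X ⟶ Y} (hO : G.O p)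
    (hp : IsCoequalizerOfKernelPair p) : Epi p := by
  obtain ⟨K, k1, k2, hK⟩ := G.pb_exists p p hO
  obtain ⟨hc⟩ := hp k1 k2 hK
  exact Cofork.IsColimit.epi hc

lemma exists_desc_of_isCoequalizerOfKernelPair {X Y W : C} {p : X ⟶ Y} (hO : G.O p)
    (hp : IsCoequalizerOfKernelPair p) (c : X ⟶ W)
    (hc : ∀ {T : C} (a b : T ⟶ X), a ≫ p = b ≫ p → a ≫ c = b ≫ c) :
    ∃ d : Y ⟶ W, p ≫ d = c := by
  obtain ⟨K, k1, k2, hK⟩ := G.pb_exists p p hO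
  obtain ⟨hcoeq⟩ := hp k1 k2 hK
  obtain ⟨d, hd⟩ := Cofork.IsColimit.desc' hcoeq c (hc k1 k2 hK.w)
  exact ⟨d, by simpa using hd⟩

lemma mem_snd_of_isEquivRelPair {U X : C} {d0 d1 : U ⟶ X} (hrel : IsEquivRelPair d0 d1)
    (h0 : G.O d0) : G.O d1 := by
  obtain ⟨σ, hσ0, hσ1⟩ := (hrel.2 U).symm ⟨𝟙 U, Category.id_comp _, Category.id_comp _⟩
  have hσσ : σ ≫ σ = 𝟙 U :=
    hrel.1 _ _ (by simp [hσ0, hσ1]) (by simp [hσ0, hσ1])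
  rw [← hσ0]
  exact G.comp_mem σ d0 (G.iso_mem σ ⟨σ, hσσ, hσσ⟩) h0

lemma exists_open_isEquivRelPair_iff {X R S Y V : C} {r : X ⟶ R} {g : R ⟶ S} {f : Y ⟶ S}
    {v1 : V ⟶ X} {v2 : V ⟶ Y} (hr : G.O r) (hV : IsPullback v1 v2 (r ≫ g) f) :
    ∃ (U : C) (d0 d1 : U ⟶ V), G.O d0 ∧ G.O d1 ∧ IsEquivRelPair d0 d1 ∧
      ∀ {T : C} (a b : T ⟶ V), (∃ h : T ⟶ U, h ≫ d0 = a ∧ h ≫ d1 = b) ↔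
        a ≫ v1 ≫ r = b ≫ v1 ≫ r ∧ a ≫ v2 = b ≫ v2 := by
  obtain ⟨K, k1, k2, hK⟩ := G.pb_exists r r hr
  have hk1 : G.O k1 := G.pb_stable k1 k2 r r hr hK
  obtain ⟨U, d0, e, hU⟩ := G.pb_exists v1 k1 hk1
  have hd1 : (e ≫ k2) ≫ r ≫ g = (d0 ≫ v2) ≫ f := by
    rw [Category.assoc, ← reassoc_of% hK.w, ← reassoc_of% hU.w, Category.assoc, hV.w]
  set d1 := hV.lift (e ≫ k2) (d0 ≫ v2) hd1
  have hm : JointlyMono d0 d1 := by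
    intro T a b h0 h1
    refine hU.hom_ext h0 (hK.hom_ext ?_ ?_)
    · simp only [Category.assoc, ← hU.w, reassoc_of% h0]
    · simpa [d1] using congrArg (· ≫ v1) h1
  have hrel : ∀ {T : C} (a b : T ⟶ V), (∃ h : T ⟶ U, h ≫ d0 = a ∧ h ≫ d1 = b) ↔
      a ≫ v1 ≫ r = b ≫ v1 ≫ r ∧ a ≫ v2 = b ≫ v2 := by
    intro T a b
    constructor
    · rintro ⟨h, rfl, rfl⟩
      simp [d1, reassoc_of% hU.w, hK.w]
    · rintro ⟨h1, h2⟩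
      refine ⟨hU.lift a (hK.lift (a ≫ v1) (b ≫ v1) (by simpa using h1)) (by simp),
        hU.lift_fst _ _ _, hV.hom_ext ?_ ?_⟩
      · simp [d1]
      · simp [d1, h2]
  have hEq : IsEquivRelPair d0 d1 :=
    isEquivRelPair_of_iff hm (fun a => (a ≫ v1 ≫ r, a ≫ v2)) fun a b => by
      rw [hrel, Prod.mk.injEq]
  have hd0 : G.O d0 := G.pb_stable d0 e v1 k1 hk1 hU
  exact ⟨U, d0, d1, hd0, G.mem_snd_of_isEquivRelPair hEq hd0, hEq, hrel⟩

lemma jointlyMono_of_isUniversalCoequalizerOfKernelPair {V Q A B : C} {q : V ⟶ Q}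
    (hO : G.O q) (hq : IsUniversalCoequalizerOfKernelPair q) (w1 : Q ⟶ A) (w2 : Q ⟶ B)
    (hw : ∀ {T : C} (a b : T ⟶ V), a ≫ q ≫ w1 = b ≫ q ≫ w1 → a ≫ q ≫ w2 = b ≫ q ≫ w2 →
      a ≫ q = b ≫ q) :
    JointlyMono w1 w2 := by
  have hcover : ∀ {T P : C} (t : T ⟶ Q) (pV : P ⟶ V) (pT : P ⟶ T),
      IsPullback pV pT q t → Epi pT := fun t pV pT h =>
    G.epi_of_isCoequalizerOfKernelPair (G.pb_stable pT pV t q hO h.flip) (hq t pV pT h)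
  intro T t t' h1 h2
  obtain ⟨P, p, x, hP⟩ := G.pb_exists t q hO
  obtain ⟨P', p', x', hP'⟩ := G.pb_exists (p ≫ t') q hO
  have := hcover _ _ _ hP.flip
  have := hcover _ _ _ hP'.flip
  rw [← cancel_epi p, ← cancel_epi p']
  have hx : (p' ≫ x) ≫ q = p' ≫ p ≫ t := by rw [Category.assoc, hP.w]
  have hx' : x' ≫ q = p' ≫ p ≫ t' := hP'.w.symm
  have key := hw (p' ≫ x) x' (by simp only [← Category.assoc, hx, hx']; simp [h1])
    (by simp only [← Category.assoc, hx, hx']; simp [h2])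
  rwa [hx, hx'] at key

lemma exists_lift_of_isUniversalCoequalizerOfKernelPair {X R S Y V Q : C} {r : X ⟶ R}
    {g : R ⟶ S} {f : Y ⟶ S} {v1 : V ⟶ X} {v2 : V ⟶ Y} (hr : G.O r)
    (hru : IsUniversalCoequalizerOfKernelPair r) (hV : IsPullback v1 v2 (r ≫ g) f)
    {q : V ⟶ Q} {w1 : Q ⟶ R} {w2 : Q ⟶ Y} (hw1 : q ≫ w1 = v1 ≫ r) (hw2 : q ≫ w2 = v2)
    (hq : ∀ {T : C} (a b : T ⟶ V), a ≫ v1 ≫ r = b ≫ v1 ≫ r → a ≫ v2 = b ≫ v2 →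
      a ≫ q = b ≫ q)
    {T : C} (t1 : T ⟶ R) (t2 : T ⟶ Y) (ht : t1 ≫ g = t2 ≫ f) :
    ∃ l : T ⟶ Q, l ≫ w1 = t1 ∧ l ≫ w2 = t2 := by
  obtain ⟨P, pT, pX, hP⟩ := G.pb_exists t1 r hr
  have hOpT : G.O pT := G.pb_stable pT pX t1 r hr hP
  have hpT : IsCoequalizerOfKernelPair pT := hru t1 pX pT hP.flip
  have := G.epi_of_isCoequalizerOfKernelPair hOpT hpT
  obtain ⟨x, hx1, hx2⟩ : ∃ x : P ⟶ V, x ≫ v1 = pX ∧ x ≫ v2 = pT ≫ t2 :=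
    ⟨hV.lift pX (pT ≫ t2) (by rw [← reassoc_of% hP.w, ht, Category.assoc]),
      hV.lift_fst _ _ _, hV.lift_snd _ _ _⟩
  obtain ⟨l, hl⟩ := G.exists_desc_of_isCoequalizerOfKernelPair hOpT hpT (x ≫ q)
    fun a b hab => by
      simp only [← Category.assoc] at hab ⊢
      apply hq
      · simp only [Category.assoc, reassoc_of% hx1, ← hP.w, reassoc_of% hab]
      · simp only [Category.assoc, hx2, reassoc_of% hab]
  refine ⟨l, ?_, ?_⟩ <;> rw [← cancel_epi pT, reassoc_of% hl]
  · rw [hw1, reassoc_of% hx1, hP.w]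
  · rw [hw2, hx2]

end Clopos

theorem stmt14_general (G : Clopos C)
    -- (G5a) open epis are effective
    (h5a : ∀ {U X : C} (u : U ⟶ X), G.O u → Epi u →
      ∀ {K : C} (k1 k2 : K ⟶ U) (hk : IsPullback k1 k2 u u),
        Nonempty (IsColimit (Cofork.ofπ u hk.w)))
    -- (G5cu, strong form) open equivalence relations are effective and have universal
    -- coequalizers belonging to `O`
    (h5cu : ∀ {U X : C} (u v : U ⟶ X), G.O u → G.O v → IsEquivRelPair u v →
      ∃ (Q : C) (q : X ⟶ Q) (hw : u ≫ q = v ≫ q),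
        G.O q ∧ Nonempty (IsColimit (Cofork.ofπ q hw)) ∧ IsPullback u v q q ∧
        ∀ {Z : C} (f : Z ⟶ Q) {X' : C} (pX : X' ⟶ X) (pZ : X' ⟶ Z),
          IsPullback pX pZ q f →
          ∀ {K : C} (k1 k2 : K ⟶ X') (hk : IsPullback k1 k2 pZ pZ),
            Nonempty (IsColimit (Cofork.ofπ pZ hk.w))) :
    -- conclusion: axiom (G5P)
    ∀ {X R S Y : C} (r : X ⟶ R) (g : R ⟶ S) (f : Y ⟶ S), G.O r → Epi r →
      (∃ (V : C) (v1 : V ⟶ X) (v2 : V ⟶ Y), IsPullback v1 v2 (r ≫ g) f) →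
      ∃ (W : C) (w1 : W ⟶ R) (w2 : W ⟶ Y), IsPullback w1 w2 g f := by
  rintro X R S Y r g f hOr hr ⟨V, v1, v2, hV⟩
  obtain ⟨K, k1, k2, hK⟩ := G.pb_exists r r hOr
  obtain ⟨_, _, _, -, ⟨hq'⟩, -, hq'u⟩ := h5cu k1 k2 (G.pb_stable k1 k2 r r hOr hK)
    (G.pb_stable k2 k1 r r hOr hK.flip) hK.isEquivRelPair
  obtain ⟨hrK⟩ := h5a r hOr hr k1 k2 hK
  have hru : IsUniversalCoequalizerOfKernelPair r :=
    IsUniversalCoequalizerOfKernelPair.of_isColimit hq' hrK hq'u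
  obtain ⟨U, d0, d1, hOd0, hOd1, hEq, hrel⟩ := G.exists_open_isEquivRelPair_iff hOr hV
  obtain ⟨Q, q, hwq, hOq, ⟨hQ⟩, -, hqu⟩ := h5cu d0 d1 hOd0 hOd1 hEq
  have hq : ∀ {T : C} (a b : T ⟶ V), a ≫ v1 ≫ r = b ≫ v1 ≫ r → a ≫ v2 = b ≫ v2 →
      a ≫ q = b ≫ q := fun a b h1 h2 => by
    obtain ⟨h, rfl, rfl⟩ := (hrel a b).2 ⟨h1, h2⟩
    rw [Category.assoc, Category.assoc, hwq]
  have hd := (hrel d0 d1).1 ⟨𝟙 U, Category.id_comp _, Category.id_comp _⟩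
  obtain ⟨w1, hw1⟩ := Cofork.IsColimit.desc' hQ (v1 ≫ r) hd.1
  obtain ⟨w2, hw2⟩ := Cofork.IsColimit.desc' hQ v2 hd.2
  simp only [Cofork.π_ofπ] at hw1 hw2
  refine ⟨Q, w1, w2, IsPullback.of_jointlyMono_of_exists_lift ?_ ?_
    (G.exists_lift_of_isUniversalCoequalizerOfKernelPair hOr hru hV hw1 hw2 hq)⟩
  · have : Epi q := Cofork.IsColimit.epi hQ
    rw [← cancel_epi q, reassoc_of% hw1, reassoc_of% hw2]
    exact hV.w
  · exact G.jointlyMono_of_isUniversalCoequalizerOfKernelPair hOq hqu w1 w2 fun a b h1 h2 =>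
      hq a b (by rwa [hw1] at h1) (by rwa [hw2] at h2)

/-- In an ultraglutos (a clopos satisfying (G2), (G3), (G4) and the strong axiom (G5)),
axiom (G5P) holds automatically: for `X →r R →g S` with `r` an open epi and `f : Y ⟶ S`,
if the pullback of `f` along `g ∘ r` exists then the pullback of `f` along `g`
exists. -/
theorem stmt14 (G : Clopos C)
    -- (G2)
    (hG2 : ∀ {X Y Z : C} (g : X ⟶ Y) (f : Y ⟶ Z), G.O (g ≫ f) → G.O f → G.O g)
    -- (G3a) each `O/X` is an elementary topos
    (h3lim : ∀ X : C, HasFiniteLimits (OSlice G X))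
    (h3cc : ∀ X : C,
      letI := h3lim X
      letI := CartesianMonoidalCategory.ofHasFiniteProducts (C := OSlice G X)
      Nonempty (MonoidalClosed (OSlice G X)))
    (h3cl : ∀ X : C,
      letI := h3lim X
      ∃ (Ω : OSlice G X) (t : ⊤_ (OSlice G X) ⟶ Ω),
        ∀ {A B : OSlice G X} (m : A ⟶ B), Mono m →
          ∃! χ : B ⟶ Ω, IsPullback (terminal.from A) m t χ)
    -- (G3b) each `f* : O/Y → O/X` is the inverse image of a geometric morphism
    (h3b : ∀ {X Y : C} (f : X ⟶ Y),
      ∃ (Fs : OSlice G Y ⥤ OSlice G X) (R : OSlice G X ⥤ OSlice G Y),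
        Nonempty (Fs ⊣ R) ∧
        ∀ g : OSlice G Y, ∃ q : (Fs.obj g).obj.left ⟶ g.obj.left,
          IsPullback (Fs.obj g).obj.hom q f g.obj.hom)
    -- (G4) disjoint and universal finite coproducts with clopen coprojections
    [HasFiniteCoproducts C] [HasInitial C]
    (h4inl : ∀ X Y : C, G.O (coprod.inl : X ⟶ X ⨿ Y) ∧ G.O (coprod.inr : Y ⟶ X ⨿ Y))
    (h4disj : ∀ X Y : C,
      IsPullback (initial.to X) (initial.to Y) (coprod.inl : X ⟶ X ⨿ Y) coprod.inr)
    (h4univ : ∀ {X Y W : C} (f : W ⟶ X ⨿ Y) {A B : C} (a : A ⟶ W) (pa : A ⟶ X)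
      (b : B ⟶ W) (pb : B ⟶ Y), IsPullback a pa f coprod.inl →
      IsPullback b pb f coprod.inr → Nonempty (IsColimit (BinaryCofan.mk a b)))
    (h4b : ∀ {A B X : C} (u : A ⟶ X) (v : B ⟶ X), G.O u → G.O v →
      G.O (coprod.desc u v))
    -- (G5a) open epis are effective
    (h5a : ∀ {U X : C} (u : U ⟶ X), G.O u → Epi u →
      ∀ {K : C} (k1 k2 : K ⟶ U) (hk : IsPullback k1 k2 u u),
        Nonempty (IsColimit (Cofork.ofπ u hk.w)))
    -- (G5b)
    (h5b : ∀ {X Y Z : C} (p : X ⟶ Y) (f : Y ⟶ Z), G.O (p ≫ f) → G.O p → Epi p → G.O f)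
    -- (G5cu, strong form) open equivalence relations are effective and have universal
    -- coequalizers belonging to `O`
    (h5cu : ∀ {U X : C} (u v : U ⟶ X), G.O u → G.O v → IsEquivRelPair u v →
      ∃ (Q : C) (q : X ⟶ Q) (hw : u ≫ q = v ≫ q),
        G.O q ∧ Nonempty (IsColimit (Cofork.ofπ q hw)) ∧ IsPullback u v q q ∧
        ∀ {Z : C} (f : Z ⟶ Q) {X' : C} (pX : X' ⟶ X) (pZ : X' ⟶ Z),
          IsPullback pX pZ q f →
          ∀ {K : C} (k1 k2 : K ⟶ X') (hk : IsPullback k1 k2 pZ pZ),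
            Nonempty (IsColimit (Cofork.ofπ pZ hk.w))) :
    -- conclusion: axiom (G5P)
    ∀ {X R S Y : C} (r : X ⟶ R) (g : R ⟶ S) (f : Y ⟶ S), G.O r → Epi r →
      (∃ (V : C) (v1 : V ⟶ X) (v2 : V ⟶ Y), IsPullback v1 v2 (r ≫ g) f) →
      ∃ (W : C) (w1 : W ⟶ R) (w2 : W ⟶ Y), IsPullback w1 w2 g f :=
  stmt14_general G h5a h5cu
end
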